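/- arXiv:2109.15090 — 3 statements merged into one kernel-verified Lean document; each statement's English description precedes it below -/
import Mathlib

section
/- Let L and M be two linear orders on a finite set V. Let d_1 <_L d_2 <_L ... <_L d_δ be nodes also satisfying d_1 <_M ... <_M d_δ. Define L_j = {v : v <_L d_j and d_j <_M v}, and let S_1 = {v : v ≤_L d_1} and S_j = {v : d_{j-1} <_L v ≤_L d_j} for j ≥ 2. Then ⋃_{j=1}^{δ} (S_j ∩ L_j) = ⋃_{j=1}^{δ} L_j. -/
/-!
A node `v` in `L_j` lies in the segment `S_i` of the first index `i` with `v ≤_L d_i`; then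
`i ≤ j`, so `d_i ≤_M d_j <_M v`. Hence `v ≠ d_i`, which makes `v <_L d_i`, i.e. `v ∈ L_i`.
-/

lemma exists_segment_index {α : Type*} [LinearOrder α] (d : ℕ → α) {v : α} {j : ℕ}
    (hj : 1 ≤ j) (hv : v ≤ d j) :
    ∃ i, 1 ≤ i ∧ i ≤ j ∧ v ≤ d i ∧ (i ≠ 1 → d (i - 1) < v) := by
  induction j, hj using Nat.le_induction with
  | base => exact ⟨1, le_rfl, le_rfl, hv, fun h => absurd rfl h⟩
  | succ j hj ih =>
    by_cases hprev : v ≤ d j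
    · obtain ⟨i, hi1, hij, hvi, hlt⟩ := ih hprev
      exact ⟨i, hi1, hij.trans j.le_succ, hvi, hlt⟩
    · exact ⟨j + 1, by omega, le_rfl, hv, fun _ => not_le.mp hprev⟩

theorem stmt_2_general {V : Type*} (L M : LinearOrder V) (δ : ℕ)
    (d : ℕ → V)
    (h : ∀ i j : ℕ, 1 ≤ i → i < j → j ≤ δ → L.lt (d i) (d j) ∧ M.lt (d i) (d j)) :
    (⋃ j ∈ Finset.Icc 1 δ,
        ((if j = 1 then {v : V | L.le v (d 1)}
          else {v : V | L.lt (d (j - 1)) v ∧ L.le v (d j)}) ∩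
          {v : V | L.lt v (d j) ∧ M.lt (d j) v})) =
      ⋃ j ∈ Finset.Icc 1 δ, {v : V | L.lt v (d j) ∧ M.lt (d j) v} := by
  refine subset_antisymm (Set.iUnion₂_mono fun _ _ => Set.inter_subset_right) ?_
  simp only [Set.subset_def, Set.mem_iUnion, Set.mem_inter_iff, Set.mem_ofPred_eq,
    Finset.mem_Icc, exists_prop]
  rintro v ⟨j, ⟨hj1, hjδ⟩, hvLj, hjMv⟩
  obtain ⟨i, hi1, hij, hvLi, hprev⟩ :=
    @exists_segment_index V L d v j hj1 (@le_of_lt V L.toPreorder _ _ hvLj)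
  have hiMv : M.lt (d i) v := by
    rcases hij.lt_or_eq with hij | rfl
    · exact @lt_trans V M.toPreorder _ _ _ (h i j hi1 hij hjδ).2 hjMv
    · exact hjMv
  have hvi : v ≠ d i := fun hvi => @lt_irrefl V M.toPreorder v (hvi ▸ hiMv)
  refine ⟨i, ⟨hi1, hij.trans hjδ⟩, ?_, @lt_of_le_of_ne V L.toPartialOrder _ _ hvLi hvi, hiMv⟩
  split_ifs with hi
  · exact hi ▸ hvLi
  · exact ⟨hprev hi, hvLi⟩

/-- ⋃ (S_j ∩ L_j) = ⋃ L_j. -/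
theorem stmt_2 {V : Type*} [Fintype V] (L M : LinearOrder V) (δ : ℕ) (hδ : 1 ≤ δ)
    (d : ℕ → V)
    (h : ∀ i j : ℕ, 1 ≤ i → i < j → j ≤ δ → L.lt (d i) (d j) ∧ M.lt (d i) (d j)) :
    (⋃ j ∈ Finset.Icc 1 δ,
        ((if j = 1 then {v : V | L.le v (d 1)}
          else {v : V | L.lt (d (j - 1)) v ∧ L.le v (d j)}) ∩
          {v : V | L.lt v (d j) ∧ M.lt (d j) v})) =
      ⋃ j ∈ Finset.Icc 1 δ, {v : V | L.lt v (d j) ∧ M.lt (d j) v} :=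
  stmt_2_general L M δ d h
end

section
/- For natural numbers k, ℓ and a real α ≥ 1: α(k + ℓ + 1) + (k + ℓ + 1) + (1 + α)(k − ℓ) ≤ max(4, 1 + α) · (α(k + 1)), i.e., the amortized cost of Move-Recursively-Forward in the generalized cost model at an access event is at most max(4, 1+α) times OPT's cost. -/
/-- amortized bound in the generalized cost model. -/
theorem stmt_8 (k ℓ : ℕ) (α : ℝ) (hα : 1 ≤ α) :
    α * ((k : ℝ) + ℓ + 1) + ((k : ℝ) + ℓ + 1) + (1 + α) * ((k : ℝ) - ℓ) ≤
      max 4 (1 + α) * (α * ((k : ℝ) + 1)) := by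
  have hk : (0 : ℝ) ≤ k := k.cast_nonneg
  have hα₀ : (0 : ℝ) ≤ α := by linarith
  calc α * ((k : ℝ) + ℓ + 1) + ((k : ℝ) + ℓ + 1) + (1 + α) * ((k : ℝ) - ℓ)
        = (1 + α) * (2 * k + 1) := by ring
    _ ≤ 2 * α * (2 * k + 1) := by gcongr; linarith
    _ ≤ 4 * (α * (k + 1)) := by nlinarith
    _ ≤ max 4 (1 + α) * (α * ((k : ℝ) + 1)) := by gcongr; exact le_max_left _ _
end

section
/- There exists a finite set of nodes, a feasible initial list configuration with no dependencies among current nodes, and a new node x with n/2 dependencies requiring half of the nodes to precede x and the other half to follow x, such that inserting x requires at least (n/2)² adjacent transpositions of the existing nodes when the first half initially alternates with (or entirely follows) the second half. -/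
theorem Finset.card_mul_card_le_ncard_inversions {α β : Type*} [LT α] [LT β] [Finite α]
    (f : α → β) {A B : Finset α} (hBA : ∀ a ∈ A, ∀ b ∈ B, b < a)
    (hf : ∀ a ∈ A, ∀ b ∈ B, f a < f b) :
    A.card * B.card ≤ {p : α × α | p.1 < p.2 ∧ f p.2 < f p.1}.ncard := by
  have hsub : (↑(B ×ˢ A) : Set (α × α)) ⊆ {p | p.1 < p.2 ∧ f p.2 < f p.1} := by
    rintro ⟨b, a⟩ hp
    obtain ⟨hb, ha⟩ := Finset.mem_product.mp hp
    exact ⟨hBA a ha b hb, hf a ha b hb⟩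
  calc A.card * B.card = (B ×ˢ A).card := by rw [Finset.card_product, mul_comm]
    _ = (↑(B ×ˢ A) : Set (α × α)).ncard := (Set.ncard_coe_finset _).symm
    _ ≤ _ := Set.ncard_le_ncard hsub (Set.toFinite _)

theorem Fin.castAdd_lt_natAdd {m : ℕ} (i j : Fin m) : Fin.castAdd m i < Fin.natAdd m j := by
  rw [Fin.lt_def, Fin.val_castAdd, Fin.val_natAdd]
  omega

/-- inserting a node may force at least (n/2)² inversions
(hence that many adjacent transpositions). -/
theorem stmt_16 : ∀ m : ℕ, ∃ (n : ℕ) (A B : Finset (Fin n)),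
    A.card = m ∧ B.card = m ∧ (∀ a ∈ A, ∀ b ∈ B, b < a) ∧
    ∀ π : Equiv.Perm (Fin n), (∀ a ∈ A, ∀ b ∈ B, π a < π b) →
      m * m ≤ {p : Fin n × Fin n | p.1 < p.2 ∧ π p.2 < π p.1}.ncard := by
  intro m
  let A : Finset (Fin (m + m)) := Finset.univ.map (Fin.natAddEmb m)
  let B : Finset (Fin (m + m)) := Finset.univ.map (Fin.castAddEmb m)
  have hA : A.card = m := by simp [A]
  have hB : B.card = m := by simp [B]
  have hBA : ∀ a ∈ A, ∀ b ∈ B, b < a := by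
    simp only [A, B, Finset.mem_map, Finset.mem_univ, true_and]
    rintro _ ⟨j, rfl⟩ _ ⟨i, rfl⟩
    exact Fin.castAdd_lt_natAdd i j
  refine ⟨m + m, A, B, hA, hB, hBA, fun π hπ => ?_⟩
  simpa only [hA, hB] using Finset.card_mul_card_le_ncard_inversions π hBA hπ
end
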